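/- Let (ℒ, ℒ̄) be a Toda Lax pair in the standard gauge and φ : ℤ → ℂ such that the constraint of type B, (T − T†)ℒ̄ = ℒ†(T − T†), holds. Then for every integer k ≥ 1 one has both (T − T†)ℒ̄^k = (ℒ†)^k (T − T†) and (T − T†)ℒ^k = (ℒ̄†)^k (T − T†). -/

import Mathlib

/-!
Write `D = T - T†`. It is tridiagonal, hence simultaneously of upper and of lower type, and
skew-adjoint, so taking adjoints turns the constraint `D L̄ = L† D` into `D L = L̄† D`.
Products of three upper-type (or three lower-type) matrices are given by finite sums and are
therefore associative, so an intertwining relation `D A = B D` inside either class propagates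
by induction to `D Aᵏ = Bᵏ D`. The two relations are of this form, `L̄, L†, D` being of upper
type and `L, L̄†, D` of lower type.
-/

/-- Pseudo-difference operators modeled as ℤ×ℤ matrices over ℂ. -/
abbrev PDO := ℤ → ℤ → ℂ

/-- Entrywise matrix product `(MN)(n,m) = Σ_k M(n,k) N(k,m)` (a `tsum`;
it reduces to a finite sum whenever the supports make it finitely supported). -/
noncomputable def pmul (M N : PDO) : PDO := fun n m => ∑' k : ℤ, M n k * N k m

/-- The adjoint: `(M†)(n,m) = M(m,n)`. -/
def padj (M : PDO) : PDO := fun n m => M m n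

/-- Matrix powers, with `ppow M 0` the identity matrix. -/
noncomputable def ppow (M : PDO) : ℕ → PDO
  | 0 => fun n m => if n = m then 1 else 0
  | k + 1 => pmul (ppow M k) M

/-- `(M)_{>0}`: the strictly upper-triangular (positive-diagonal) part. -/
def pplus (M : PDO) : PDO := fun n m => if n < m then M n m else 0

/-- `(M)_{<0}`: the strictly lower-triangular (negative-diagonal) part. -/
def pminus (M : PDO) : PDO := fun n m => if m < n then M n m else 0

/-- `(M)_0`: the diagonal part. -/
def pzero (M : PDO) : PDO := fun n m => if n = m then M n m else 0

/-- `(M)_j`: the j-th diagonal part, with `(n, n+j)` entry `M(n, n+j)`. -/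
def pdiag (j : ℤ) (M : PDO) : PDO := fun n m => if m = n + j then M n m else 0

/-- The shift matrix Λ: entries 1 iff `m = n+1`. -/
def shiftΛ : PDO := fun n m => if m = n + 1 then 1 else 0

/-- The inverse shift matrix Λ⁻¹ (transpose of Λ): entries 1 iff `m = n-1`. -/
def shiftΛinv : PDO := fun n m => if m = n - 1 then 1 else 0

/-- Matrix `T` with entries `T(n,m) = e^{-φ(n)}` if `m = n+1`, else 0. -/
noncomputable def Tmat (φ : ℤ → ℂ) : PDO :=
  fun n m => if m = n + 1 then Complex.exp (-(φ n)) else 0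

/-- A Toda Lax pair in the standard gauge: `L` is of lower type with
`L(n,m) = 0` for `m > n+1` and `L(n,n+1) = 1`; `L̄` is of upper type with
`L̄(n,m) = 0` for `m < n-1`. -/
def IsStandardPair (L Lb : PDO) : Prop :=
  (∀ n m : ℤ, n + 1 < m → L n m = 0) ∧ (∀ n : ℤ, L n (n + 1) = 1) ∧
  (∀ n m : ℤ, m < n - 1 → Lb n m = 0)

/-- `B_k = (L^k)_{>0}`. -/
noncomputable def Bop (L : PDO) (k : ℕ) : PDO := pplus (ppow L k)

/-- `Φ_k = (L^k)_0`. -/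
noncomputable def Phiop (L : PDO) (k : ℕ) : PDO := pzero (ppow L k)

/-- `B̄_k = (L̄^k)_{<0}`. -/
noncomputable def Bbarop (Lb : PDO) (k : ℕ) : PDO := pminus (ppow Lb k)

noncomputable def pid : PDO := fun n m => if n = m then 1 else 0

def IsUpperType (M : PDO) : Prop := ∃ N : ℤ, ∀ n m : ℤ, N < n - m → M n m = 0

def IsLowerType (M : PDO) : Prop := ∃ N : ℤ, ∀ n m : ℤ, N < m - n → M n m = 0

lemma ppow_zero (M : PDO) : ppow M 0 = pid := rfl

lemma ppow_succ (M : PDO) (k : ℕ) : ppow M (k + 1) = pmul (ppow M k) M := rfl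

lemma pmul_pid (A : PDO) : pmul A pid = A := by
  funext n m
  exact (tsum_eq_single m fun k hk => by simp [pid, hk]).trans (by simp [pid])

lemma pid_pmul (A : PDO) : pmul pid A = A := by
  funext n m
  exact (tsum_eq_single n fun k hk => by simp [pid, Ne.symm hk]).trans (by simp [pid])

lemma padj_padj (A : PDO) : padj (padj A) = A := rfl

lemma padj_pmul (A B : PDO) : padj (pmul A B) = pmul (padj B) (padj A) := by
  funext n m
  exact tsum_congr fun k => mul_comm _ _

lemma pmul_neg (A B : PDO) : pmul A (-B) = -pmul A B := by
  funext n m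
  simp [pmul, tsum_neg]

lemma neg_pmul (A B : PDO) : pmul (-A) B = -pmul A B := by
  funext n m
  simp [pmul, tsum_neg]

lemma padj_sub_padj_self (M : PDO) : padj (M - padj M) = -(M - padj M) := by
  funext n m
  simp [padj]

lemma pmul_padj_eq_of_padj_eq_neg {D A B : PDO} (hD : padj D = -D)
    (h : pmul D A = pmul B D) : pmul D (padj B) = pmul (padj A) D := by
  have h' := congrArg padj h
  rw [padj_pmul, padj_pmul, hD, pmul_neg, neg_pmul, neg_inj] at h'
  exact h'.symm

lemma pmul_assoc_of_finite_support {A B C : PDO}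
    (h : ∀ n m : ℤ, (Function.support fun p : ℤ × ℤ => A n p.1 * B p.1 p.2 * C p.2 m).Finite) :
    pmul (pmul A B) C = pmul A (pmul B C) := by
  funext n m
  calc pmul (pmul A B) C n m = ∑' j, ∑' k, A n k * B k j * C j m := by
        simp only [pmul, ← tsum_mul_right]
    _ = ∑' k, ∑' j, A n k * B k j * C j m :=
        (summable_of_hasFiniteSupport (h n m)).tsum_comm
    _ = pmul A (pmul B C) n m := by simp only [pmul, mul_assoc, tsum_mul_left]

lemma isUpperType_pid : IsUpperType pid :=
  ⟨0, fun n m h => if_neg (by omega)⟩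

lemma IsUpperType.pmul {A B : PDO} (hA : IsUpperType A) (hB : IsUpperType B) :
    IsUpperType (pmul A B) := by
  obtain ⟨NA, hA⟩ := hA
  obtain ⟨NB, hB⟩ := hB
  refine ⟨NA + NB, fun n m h => ?_⟩
  have hterm : ∀ k, A n k * B k m = 0 := fun k => by
    by_cases hk : NA < n - k
    · rw [hA n k hk, zero_mul]
    · rw [hB k m (by omega), mul_zero]
  exact (tsum_congr hterm).trans tsum_zero

lemma pmul_assoc_of_isUpperType {A B C : PDO} (hA : IsUpperType A) (hB : IsUpperType B)
    (hC : IsUpperType C) : pmul (pmul A B) C = pmul A (pmul B C) := by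
  obtain ⟨NA, hA⟩ := hA
  obtain ⟨NB, hB⟩ := hB
  obtain ⟨NC, hC⟩ := hC
  refine pmul_assoc_of_finite_support fun n m =>
    (Set.finite_Icc (n - NA, n - NA - NB) (m + NC + NB, m + NC)).subset ?_
  rintro ⟨k, j⟩ hkj
  simp only [Function.mem_support, ne_eq, mul_eq_zero, not_or] at hkj
  obtain ⟨⟨hAk, hBkj⟩, hCj⟩ := hkj
  have := mt (hA n k) hAk
  have := mt (hB k j) hBkj
  have := mt (hC j m) hCj
  simp only [Set.mem_Icc, Prod.mk_le_mk]
  omega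

lemma isUpperType_padj_iff {M : PDO} : IsUpperType (padj M) ↔ IsLowerType M :=
  exists_congr fun _ => forall_comm

lemma isLowerType_pid : IsLowerType pid :=
  ⟨0, fun n m h => if_neg (by omega)⟩

lemma IsLowerType.pmul {A B : PDO} (hA : IsLowerType A) (hB : IsLowerType B) :
    IsLowerType (pmul A B) := by
  rw [← isUpperType_padj_iff, padj_pmul]
  exact (isUpperType_padj_iff.2 hB).pmul (isUpperType_padj_iff.2 hA)

lemma pmul_assoc_of_isLowerType {A B C : PDO} (hA : IsLowerType A) (hB : IsLowerType B)
    (hC : IsLowerType C) : pmul (pmul A B) C = pmul A (pmul B C) := by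
  have h := congrArg padj <| pmul_assoc_of_isUpperType (isUpperType_padj_iff.2 hC)
    (isUpperType_padj_iff.2 hB) (isUpperType_padj_iff.2 hA)
  simp only [padj_pmul, padj_padj] at h
  exact h.symm

lemma pmul_ppow_eq_ppow_pmul {P : PDO → Prop} (hone : P pid)
    (hmul : ∀ X Y, P X → P Y → P (pmul X Y))
    (hassoc : ∀ X Y Z, P X → P Y → P Z → pmul (pmul X Y) Z = pmul X (pmul Y Z))
    {D A B : PDO} (hD : P D) (hA : P A) (hB : P B) (h : pmul D A = pmul B D) (k : ℕ) :
    pmul D (ppow A k) = pmul (ppow B k) D := by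
  have hpow : ∀ {X} (k : ℕ), P X → P (ppow X k) := fun k hX => by
    induction k with
    | zero => exact hone
    | succ k ih => exact hmul _ _ ih hX
  induction k with
  | zero => rw [ppow_zero, ppow_zero, pmul_pid, pid_pmul]
  | succ k ih =>
    calc pmul D (ppow A (k + 1)) = pmul (pmul D (ppow A k)) A :=
          (hassoc _ _ _ hD (hpow k hA) hA).symm
      _ = pmul (ppow B k) (pmul D A) := by rw [ih, hassoc _ _ _ (hpow k hB) hD hA]
      _ = pmul (ppow B (k + 1)) D := by rw [h, ← hassoc _ _ _ (hpow k hB) hB hD, ppow_succ]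

lemma tmat_sub_padj_eq_zero (φ : ℤ → ℂ) {n m : ℤ} (h : 1 < |n - m|) :
    (Tmat φ - padj (Tmat φ)) n m = 0 := by
  rw [lt_abs] at h
  simp only [Pi.sub_apply, Tmat, padj]
  rw [if_neg (by omega), if_neg (by omega), sub_zero]

lemma isUpperType_tmat_sub_padj (φ : ℤ → ℂ) : IsUpperType (Tmat φ - padj (Tmat φ)) :=
  ⟨1, fun _ _ h => tmat_sub_padj_eq_zero φ (lt_abs.2 (Or.inl h))⟩

lemma isLowerType_tmat_sub_padj (φ : ℤ → ℂ) : IsLowerType (Tmat φ - padj (Tmat φ)) :=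
  ⟨1, fun _ _ h => tmat_sub_padj_eq_zero φ (lt_abs.2 (Or.inr (by omega)))⟩

lemma IsStandardPair.isLowerType_left {L Lb : PDO} (h : IsStandardPair L Lb) :
    IsLowerType L :=
  ⟨1, fun n m hnm => h.1 n m (by omega)⟩

lemma IsStandardPair.isUpperType_right {L Lb : PDO} (h : IsStandardPair L Lb) :
    IsUpperType Lb :=
  ⟨1, fun n m hnm => h.2.2 n m (by omega)⟩

/-- the constraint of type B propagates to all powers of the
Lax operators. -/
theorem typeB_constraint_powers
    (L Lb : PDO) (φ : ℤ → ℂ)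
    (hpair : IsStandardPair L Lb)
    (hconstr : pmul (Tmat φ - padj (Tmat φ)) Lb
      = pmul (padj L) (Tmat φ - padj (Tmat φ))) :
    ∀ k : ℕ, 1 ≤ k →
      pmul (Tmat φ - padj (Tmat φ)) (ppow Lb k)
        = pmul (ppow (padj L) k) (Tmat φ - padj (Tmat φ))
      ∧ pmul (Tmat φ - padj (Tmat φ)) (ppow L k)
        = pmul (ppow (padj Lb) k) (Tmat φ - padj (Tmat φ)) := by
  intro k _
  have hconstr' : pmul (Tmat φ - padj (Tmat φ)) L
      = pmul (padj Lb) (Tmat φ - padj (Tmat φ)) :=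
    pmul_padj_eq_of_padj_eq_neg (padj_sub_padj_self _) hconstr
  exact ⟨pmul_ppow_eq_ppow_pmul isUpperType_pid (fun _ _ => IsUpperType.pmul)
      (fun _ _ _ => pmul_assoc_of_isUpperType) (isUpperType_tmat_sub_padj φ)
      hpair.isUpperType_right (isUpperType_padj_iff.2 hpair.isLowerType_left) hconstr k,
    pmul_ppow_eq_ppow_pmul isLowerType_pid (fun _ _ => IsLowerType.pmul)
      (fun _ _ _ => pmul_assoc_of_isLowerType) (isLowerType_tmat_sub_padj φ)
      hpair.isLowerType_left (isUpperType_padj_iff.1 hpair.isUpperType_right) hconstr' k⟩
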